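/- Let P_1, ..., P_d be finite well-separated point sets in R^d, and let x_1, x_1' ∈ conv(P_1), ..., x_d, x_d' ∈ conv(P_d) be two colorful selections spanning hyperplanes H and H' with unit normals n̂ and n̂' chosen by the positive-determinant convention. If H = H' as sets, then n̂ = n̂'; that is, the orientation of a hyperplane transversal to all conv(P_i) does not depend on the choice of points x_i ∈ conv(P_i) ∩ H. -/

import Mathlib

open Set
open scoped RealInnerProductSpace

/-- `P` is well-separated: every colorful selection of points, one from the convex hull of
each of `k` distinct color classes, is affinely independent. -/
def WellSeparated {d : ℕ} (P : Fin d → Finset (EuclideanSpace ℝ (Fin d))) : Prop :=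
  ∀ (k : ℕ) (ι : Fin k → Fin d), Function.Injective ι →
    ∀ y : Fin k → EuclideanSpace ℝ (Fin d),
      (∀ j, y j ∈ convexHull ℝ (P (ι j) : Set (EuclideanSpace ℝ (Fin d)))) →
      AffineIndependent ℝ y

/-- The `(d+1) × (d+1)` matrix whose first `d` columns are the points `x j` with a `1`
appended, and whose last column is `v` with `c` appended. -/
def colMat {d : ℕ} (x : Fin d → EuclideanSpace ℝ (Fin d))
    (v : EuclideanSpace ℝ (Fin d)) (c : ℝ) : Matrix (Fin (d + 1)) (Fin (d + 1)) ℝ :=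
  Matrix.of fun i j =>
    if hi : (i : ℕ) < d then
      (if hj : (j : ℕ) < d then x ⟨j, hj⟩ ⟨i, hi⟩ else v ⟨i, hi⟩)
    else
      (if (j : ℕ) < d then (1 : ℝ) else c)

/-!
Two unit normals of the same hyperplane differ at most by a sign, and reversing the normal
reverses the sign of the determinant, so it suffices to see that the determinant keeps its sign
as the colorful selection moves inside the hyperplane. The colorful selections lying on a fixed
hyperplane form a convex, hence connected, set, on which the determinant never vanishes: a kernel
vector `(g, a)` gives `∑ g j • x j + a • n = 0` with `∑ g j = 0`; pairing with `n` forces `a = 0`,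
and then affine independence of the selection forces `g = 0`.
-/

theorem eq_or_eq_neg_of_setOf_inner_eq {E : Type*} [NormedAddCommGroup E]
    [InnerProductSpace ℝ E] {n n' : E} {t t' : ℝ} (hn : ‖n‖ = 1) (hn' : ‖n'‖ = 1)
    (hH : {y : E | ⟪y, n⟫ = t} = {y | ⟪y, n'⟫ = t'}) : n' = n ∨ n' = -n := by
  have mem (y : E) (hy : ⟪y, n⟫ = t) : ⟪y, n'⟫ = t' := hH.subset hy
  have hnn : ⟪n, n⟫ = 1 := by rw [real_inner_self_eq_norm_sq, hn, one_pow]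
  set c := ⟪n', n⟫
  set w := n' - c • n with hw_def
  have hwn : ⟪w, n⟫ = 0 := by
    rw [inner_sub_left, real_inner_smul_left, hnn, mul_one, sub_self]
  have hwn' : ⟪w, n'⟫ = 0 := by
    have h₀ := mem (t • n) (by rw [real_inner_smul_left, hnn, mul_one])
    have h₁ := mem (t • n + w) (by rw [inner_add_left, real_inner_smul_left, hnn, mul_one, hwn,
      add_zero])
    rw [inner_add_left, h₀] at h₁
    linarith
  have hw : w = 0 := by
    refine inner_self_eq_zero (𝕜 := ℝ) |>.1 ?_
    rw [hw_def, inner_sub_right, hwn', real_inner_smul_right, hwn, mul_zero, sub_zero]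
  have hn'c : n' = c • n := sub_eq_zero.1 hw
  have hc : |c| = 1 := by
    simpa [hn, hn', norm_smul] using (congrArg norm hn'c).symm
  rcases abs_eq zero_le_one |>.1 hc with hc | hc
  · exact .inl (by rw [hn'c, hc, one_smul])
  · exact .inr (by rw [hn'c, hc, neg_one_smul])

section colMat

variable {d : ℕ}

theorem colMat_mulVec_last (x : Fin d → EuclideanSpace ℝ (Fin d)) (v : EuclideanSpace ℝ (Fin d))
    (c : ℝ) (w : Fin (d + 1) → ℝ) :
    (colMat x v c).mulVec w (Fin.last d) = ∑ j : Fin d, w j.castSucc + c * w (Fin.last d) := by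
  simp [colMat, Matrix.mulVec, dotProduct, Fin.sum_univ_castSucc]

theorem colMat_mulVec_castSucc (x : Fin d → EuclideanSpace ℝ (Fin d))
    (v : EuclideanSpace ℝ (Fin d)) (c : ℝ) (w : Fin (d + 1) → ℝ) (i : Fin d) :
    (colMat x v c).mulVec w i.castSucc = (∑ j, w j.castSucc • x j + w (Fin.last d) • v) i := by
  simp [colMat, Matrix.mulVec, dotProduct, Fin.sum_univ_castSucc, mul_comm]

theorem det_colMat_ne_zero {x : Fin d → EuclideanSpace ℝ (Fin d)} {n : EuclideanSpace ℝ (Fin d)}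
    {t : ℝ} (hn : n ≠ 0) (hx : AffineIndependent ℝ x) (ht : ∀ i, ⟪x i, n⟫ = t) :
    (colMat x n 0).det ≠ 0 := by
  intro h
  obtain ⟨w, hw0, hw⟩ := Matrix.exists_mulVec_eq_zero_iff.2 h
  set g : Fin d → ℝ := fun j => w j.castSucc
  set a := w (Fin.last d)
  have hsum : ∑ j, g j = 0 := by
    simpa [colMat_mulVec_last] using congrFun hw (Fin.last d)
  have hcomb : ∑ j, g j • x j + a • n = 0 := by
    ext i
    simpa [colMat_mulVec_castSucc] using congrFun hw i.castSucc
  have ha : a = 0 := by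
    have := congrArg (⟪·, n⟫) hcomb
    simp only [inner_add_left, sum_inner, real_inner_smul_left, ht, ← Finset.sum_mul, hsum,
      zero_mul, zero_add, inner_zero_left] at this
    exact (mul_eq_zero.1 this).resolve_right (inner_self_ne_zero.2 hn)
  have hg : ∀ j, g j = 0 := fun j =>
    affineIndependent_iff.1 hx Finset.univ g hsum (by simpa [ha] using hcomb) j (Finset.mem_univ j)
  exact hw0 (funext (Fin.lastCases ha hg))

theorem det_colMat_neg (x : Fin d → EuclideanSpace ℝ (Fin d)) (v : EuclideanSpace ℝ (Fin d))
    (c : ℝ) : (colMat x (-v) (-c)).det = -(colMat x v c).det := by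
  have hcol : colMat x (-v) (-c) = (colMat x v c).updateCol (Fin.last d)
      ((-1 : ℝ) • fun i => colMat x v c i (Fin.last d)) := by
    ext i j
    induction i using Fin.lastCases <;> induction j using Fin.lastCases <;> simp [colMat]
  rw [hcol, Matrix.det_updateCol_smul, Matrix.updateCol_eq_self, neg_one_mul]

theorem continuous_det_colMat (v : EuclideanSpace ℝ (Fin d)) (c : ℝ) :
    Continuous fun x : Fin d → EuclideanSpace ℝ (Fin d) => (colMat x v c).det := by
  refine Continuous.matrix_det (continuous_matrix fun i j => ?_)
  simp only [colMat, Matrix.of_apply]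
  split_ifs <;> fun_prop

end colMat

theorem det_colMat_pos_of_wellSeparated {d : ℕ} {P : Fin d → Finset (EuclideanSpace ℝ (Fin d))}
    (hP : WellSeparated P) {x x' : Fin d → EuclideanSpace ℝ (Fin d)}
    {n : EuclideanSpace ℝ (Fin d)} {t : ℝ} (hn : n ≠ 0)
    (hx : ∀ i, x i ∈ convexHull ℝ (P i : Set (EuclideanSpace ℝ (Fin d))))
    (hx' : ∀ i, x' i ∈ convexHull ℝ (P i : Set (EuclideanSpace ℝ (Fin d))))
    (ht : ∀ i, ⟪x i, n⟫ = t) (ht' : ∀ i, ⟪x' i, n⟫ = t)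
    (hdet : 0 < (colMat x n 0).det) : 0 < (colMat x' n 0).det := by
  set S := univ.pi fun i => convexHull ℝ (P i : Set (EuclideanSpace ℝ (Fin d))) ∩ {y | ⟪y, n⟫ = t}
  have hS : Convex ℝ S := convex_pi fun i _ => (convex_convexHull ℝ _).inter <|
    convex_hyperplane ⟨fun y z => inner_add_left y z n, fun r y => real_inner_smul_left y n r⟩ t
  refine hS.isPreconnected.lt_of_ne (continuous_det_colMat n 0).continuousOn (fun y hy => ?_)
    ⟨x, fun i _ => ⟨hx i, ht i⟩, hdet⟩ fun i _ => ⟨hx' i, ht' i⟩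
  exact det_colMat_ne_zero hn (hP d id Function.injective_id y fun i => (hy i trivial).1)
    fun i => (hy i trivial).2

theorem orientation_independent_of_colorful_selection
    {d : ℕ} (P : Fin d → Finset (EuclideanSpace ℝ (Fin d))) (hws : WellSeparated P)
    (x x' : Fin d → EuclideanSpace ℝ (Fin d))
    (n n' : EuclideanSpace ℝ (Fin d)) (t t' : ℝ)
    (hx : ∀ i, x i ∈ convexHull ℝ (P i : Set (EuclideanSpace ℝ (Fin d))))
    (hx' : ∀ i, x' i ∈ convexHull ℝ (P i : Set (EuclideanSpace ℝ (Fin d))))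
    (hn : ‖n‖ = 1) (hn' : ‖n'‖ = 1)
    (ht : ∀ i, ⟪x i, n⟫ = t) (ht' : ∀ i, ⟪x' i, n'⟫ = t')
    (hdet : 0 < (colMat x n 0).det) (hdet' : 0 < (colMat x' n' 0).det)
    (hH : {y : EuclideanSpace ℝ (Fin d) | ⟪y, n⟫ = t} =
      {y : EuclideanSpace ℝ (Fin d) | ⟪y, n'⟫ = t'}) :
    n = n' := by
  rcases eq_or_eq_neg_of_setOf_inner_eq hn hn' hH with rfl | rfl
  · rfl
  · have hx'n : ∀ i, ⟪x' i, n⟫ = t := fun i => hH.symm.subset (ht' i)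
    have hpos := det_colMat_pos_of_wellSeparated hws (ne_zero_of_norm_ne_zero (hn ▸ one_ne_zero))
      hx hx' ht hx'n hdet
    rw [← neg_zero, det_colMat_neg] at hdet'
    linarith
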